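/- arXiv:1906.07976 — 5 statements merged into one kernel-verified Lean document; each statement's English description precedes it below -/
import Mathlib

section
/- Let A be an abelian category, G : FinSet* → A a functor, and n ≥ 0 an integer. The following conditions are equivalent: (i) for every finite set I with |I| > n, G({*} ⊔ I) = Σ_{i ∈ I} Im(G(φ_{I∖{i},I})); (ii) for every I with |I| > n, ∩_{i ∈ I} ker(G(ψ_{I∖{i},I})) = 0; (iii) the functor Prim(G) sends I to 0 for all |I| > n. -/
open CategoryTheory Limits

universe v u

/-- Skeleton of the category `FinSet*` of pointed finite sets: the object `⟨m⟩`
represents `{*} ⊔ Fin m`, and morphisms are pointed maps, encoded as partially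
defined maps (`none` = basepoint). -/
structure PtdFin : Type where
  n : ℕ

instance : Category.{0} PtdFin where
  Hom X Y := Fin X.n → Option (Fin Y.n)
  id X := some
  comp f g := fun i => (f i).bind g
  id_comp f := rfl
  comp_id f := by
    funext i; show (f i).bind some = f i; cases f i <;> rfl
  assoc f g h := by
    funext i
    show ((f i).bind g).bind h = (f i).bind fun j => (g j).bind h
    cases f i <;> rfl

/-- The pointed map `ψ_{I∖{i},I} : {*} ⊔ I → {*} ⊔ (I∖{i})`, the identity away
from `i` and collapsing `i` to the basepoint. -/
def psiDel {m : ℕ} (i : Fin (m + 1)) : (⟨m + 1⟩ : PtdFin) ⟶ ⟨m⟩ :=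
  ⇑(finSuccEquiv' i)

/-- The pointed map `φ_{I∖{i},I} : {*} ⊔ (I∖{i}) → {*} ⊔ I` induced by the
inclusion `I∖{i} ↪ I`. -/
def phiIns {m : ℕ} (i : Fin (m + 1)) : (⟨m⟩ : PtdFin) ⟶ ⟨m + 1⟩ :=
  fun j => some (i.succAbove j)

/-- The pointed map `ψ_{S,I} : {*} ⊔ I → {*} ⊔ S` for a subset `S ⊆ I`: the
identity on `S` and collapsing `I ∖ S` to the basepoint (here `S` is identified
with `Fin S.card` via the order isomorphism). -/
def psiSub {m : ℕ} (S : Finset (Fin m)) : (⟨m⟩ : PtdFin) ⟶ ⟨S.card⟩ :=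
  fun j => if h : j ∈ S then some ((S.orderIsoOfFin rfl).symm ⟨j, h⟩) else none

/-- `Prim(G)(I) = ∩_{S ⊊ I} ker G(ψ_{S,I})`, as a subobject of `G({*} ⊔ I)`. -/
noncomputable def primSubobject {A : Type u} [Category.{v} A] [Abelian A]
    (G : PtdFin ⥤ A) (m : ℕ) : Subobject (G.obj ⟨m⟩) :=
  (Finset.univ.filter fun S : Finset (Fin m) => S ≠ Finset.univ).inf
    fun S => kernelSubobject (G.map (psiSub S))

/-!
Let `π_i = ψ_{I∖{i},I} ≫ φ_{I∖{i},I}` be the pointed map collapsing `i` to the basepoint.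
Since `φ_{I∖{i},I}` is a section of `ψ_{I∖{i},I}`, the endomorphisms `e_i = G(π_i)` are
idempotents with `ker e_i = ker G(ψ_{I∖{i},I})` and `im e_i = im G(φ_{I∖{i},I})`, and they
commute because the `π_i` do. For the product `Q = ∏_i (1 - e_i)` one has `Q e_i = e_i Q = 0`,
so `Q` vanishes on `Σ_i im e_i` and takes values in `⋂_i ker e_i`; conversely `Q` is the
identity on `⋂_i ker e_i`, and `1 - Q` takes values in `Σ_i im e_i`. Hence both (i) and (ii)
say `Q = 0`. Finally, every `ψ_{S,I}` with `S ⊊ I` factors through some `ψ_{I∖{i},I}`, which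
gives (ii) ⟺ (iii); the two encodings `psiDel i` and `psiSub (univ.erase i)` of `ψ_{I∖{i},I}`
factor through each other.
-/

theorem Commute.one_sub_one_sub {R : Type*} [Ring R] {a b : R} (h : Commute a b) :
    Commute (1 - a) (1 - b) :=
  (Commute.one_right _).sub_right ((Commute.one_left _).sub_left h)

section Ring

variable {R : Type*} [Ring R] {ι : Type*} (e : ι → R) (hc : ∀ i j, Commute (e i) (e j))

def prodOneSub (s : Finset ι) : R :=
  s.noncommProd (fun i => 1 - e i) fun i _ j _ _ => (hc i j).one_sub_one_sub

theorem prodOneSub_empty : prodOneSub e hc ∅ = 1 :=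
  Finset.noncommProd_empty _ _

theorem prodOneSub_insert [DecidableEq ι] {s : Finset ι} {a : ι} (ha : a ∉ s) :
    prodOneSub e hc (insert a s) = (1 - e a) * prodOneSub e hc s :=
  Finset.noncommProd_insert_of_notMem _ _ _ _ ha

theorem commute_prodOneSub (s : Finset ι) (i : ι) : Commute (e i) (prodOneSub e hc s) :=
  Finset.noncommProd_commute _ _ _ _ fun j _ => (Commute.one_right _).sub_right (hc i j)

variable {e} (he : ∀ i, IsIdempotentElem (e i))
include he

theorem mul_prodOneSub_of_mem {s : Finset ι} {i : ι} (hi : i ∈ s) :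
    e i * prodOneSub e hc s = 0 := by
  classical
  rw [← Finset.insert_erase hi, prodOneSub_insert e hc (s.notMem_erase i), ← mul_assoc,
    (he i).mul_one_sub_self, zero_mul]

theorem prodOneSub_mul_of_mem {s : Finset ι} {i : ι} (hi : i ∈ s) :
    prodOneSub e hc s * e i = 0 :=
  (commute_prodOneSub e hc s i).eq ▸ mul_prodOneSub_of_mem hc he hi

end Ring

section CommutingIdempotents

variable {C : Type*} [Category C] [Abelian C] {X : C} {ι : Type*} (e : ι → End X)
  (hc : ∀ i j, Commute (e i) (e j))

theorem comp_prodOneSub {W : C} (x : W ⟶ X) (s : Finset ι) (hx : ∀ i ∈ s, x ≫ e i = 0) :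
    x ≫ (prodOneSub e hc s : End X) = x := by
  classical
  induction s using Finset.induction_on with
  | empty => exact Category.comp_id x
  | insert a s ha ih =>
    rw [prodOneSub_insert e hc ha, End.mul_def, ← Category.assoc,
      ih fun i hi => hx i (Finset.mem_insert_of_mem hi), Preadditive.comp_sub,
      hx a (Finset.mem_insert_self a s), sub_zero]
    exact Category.comp_id x

theorem factors_sup_imageSubobject_one_sub_prodOneSub (s : Finset ι) :
    (s.sup fun i => imageSubobject (e i)).Factors (1 - prodOneSub e hc s : End X) := by
  classical
  induction s using Finset.induction_on with
  | empty => simpa [prodOneSub_empty] using Subobject.factors_zero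
  | insert a s ha ih =>
    have hsplit : 1 - (1 - e a) * prodOneSub e hc s =
        (1 - prodOneSub e hc s) + e a * prodOneSub e hc s := by
      noncomm_ring
    rw [prodOneSub_insert e hc ha, hsplit, Finset.sup_insert]
    exact Subobject.factors_add _ _ (Subobject.factors_of_le _ le_sup_right ih)
      (Subobject.factors_of_le _ le_sup_left (imageSubobject_factors_comp_self _ _))

variable {e} (he : ∀ i, IsIdempotentElem (e i))
include he

theorem inf_kernelSubobject_eq_bot_iff (s : Finset ι) :
    (s.inf fun i => kernelSubobject (e i)) = ⊥ ↔ prodOneSub e hc s = 0 := by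
  constructor
  · intro h
    have hQ : (s.inf fun i => kernelSubobject (e i)).Factors (prodOneSub e hc s : End X) :=
      (Subobject.finset_inf_factors _).2 fun i hi =>
        kernelSubobject_factors _ _ (mul_prodOneSub_of_mem hc he hi)
    rwa [h, Subobject.bot_factors_iff_zero] at hQ
  · intro hQ
    set K := s.inf fun i => kernelSubobject (e i)
    have hK : ∀ i ∈ s, K.arrow ≫ e i = 0 := fun i hi =>
      (kernelSubobject_factors_iff _ _).1
        ((Subobject.finset_inf_factors _).1 (Subobject.factors_self K) i hi)
    have h0 : K.arrow = 0 := by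
      rw [← comp_prodOneSub e hc K.arrow s hK, hQ]
      exact comp_zero
    exact le_bot_iff.1 (Subobject.le_of_factors ((Subobject.bot_factors_iff_zero _).2 h0))

theorem sup_imageSubobject_eq_top_iff (s : Finset ι) :
    (s.sup fun i => imageSubobject (e i)) = ⊤ ↔ prodOneSub e hc s = 0 := by
  constructor
  · intro h
    have hle : (s.sup fun i => imageSubobject (e i)) ≤
        kernelSubobject (prodOneSub e hc s : End X) :=
      Finset.sup_le fun i hi => le_kernelSubobject _ _
        (imageSubobject_arrow_comp_eq_zero (prodOneSub_mul_of_mem hc he hi))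
    rw [h, top_le_iff] at hle
    simpa using (kernelSubobject_factors_iff _ (𝟙 X)).1 (hle ▸ Subobject.top_factors _)
  · intro hQ
    have hid := factors_sup_imageSubobject_one_sub_prodOneSub e hc s
    rw [hQ, sub_zero] at hid
    exact top_le_iff.1 (Subobject.le_of_factors (by
      simpa using Subobject.factors_of_factors_right (⊤ : Subobject X).arrow hid))

end CommutingIdempotents

section Retractions

variable {C : Type*} [Category C] [Abelian C]

theorem imageSubobject_comp_eq_of_comp_eq_id {A B : C} {s : A ⟶ B} {r : B ⟶ A}
    (h : s ≫ r = 𝟙 A) : imageSubobject (r ≫ s) = imageSubobject s := by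
  refine le_antisymm (imageSubobject_comp_le r s) ?_
  calc imageSubobject s = imageSubobject (s ≫ r ≫ s) := by
        rw [← Category.assoc, h, Category.id_comp]
    _ ≤ imageSubobject (r ≫ s) := imageSubobject_comp_le s (r ≫ s)

theorem kernelSubobject_comp_eq_of_comp_eq_id {A B : C} {s : A ⟶ B} {r : B ⟶ A}
    (h : s ≫ r = 𝟙 A) : kernelSubobject (r ≫ s) = kernelSubobject r := by
  refine le_antisymm ?_ (kernelSubobject_comp_le r s)
  calc kernelSubobject (r ≫ s)
      ≤ kernelSubobject ((r ≫ s) ≫ r) := kernelSubobject_comp_le _ r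
    _ = kernelSubobject r := by rw [Category.assoc, h, Category.comp_id]

theorem sup_imageSubobject_eq_top_iff_inf_kernelSubobject_eq_bot {X : C} {ι : Type*}
    {Y : ι → C} (sec : ∀ i, Y i ⟶ X) (ret : ∀ i, X ⟶ Y i)
    (hsr : ∀ i, sec i ≫ ret i = 𝟙 (Y i))
    (hc : ∀ i j, (ret i ≫ sec i) ≫ ret j ≫ sec j = (ret j ≫ sec j) ≫ ret i ≫ sec i)
    (s : Finset ι) :
    (s.sup fun i => imageSubobject (sec i)) = ⊤ ↔
      (s.inf fun i => kernelSubobject (ret i)) = ⊥ := by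
  let e : ι → End X := fun i => ret i ≫ sec i
  have he : ∀ i, IsIdempotentElem (e i) := fun i => by
    change (ret i ≫ sec i) ≫ ret i ≫ sec i = ret i ≫ sec i
    rw [Category.assoc, ← Category.assoc (sec i), hsr, Category.id_comp]
  have hc' : ∀ i j, Commute (e i) (e j) := fun i j => hc j i
  simp only [← imageSubobject_comp_eq_of_comp_eq_id (hsr _),
    ← kernelSubobject_comp_eq_of_comp_eq_id (hsr _)]
  exact (sup_imageSubobject_eq_top_iff hc' he s).trans
    (inf_kernelSubobject_eq_bot_iff hc' he s).symm

end Retractions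

namespace PtdFin

theorem comp_apply {X Y Z : PtdFin} (f : X ⟶ Y) (g : Y ⟶ Z) (j : Fin X.n) :
    (f ≫ g) j = (f j).bind g :=
  rfl

theorem exists_comp_eq {X Y Z : PtdFin} (g : X ⟶ Y) (f : X ⟶ Z)
    (hinj : ∀ j k y, g j = some y → g k = some y → j = k)
    (hnone : ∀ j, g j = none → f j = none) : ∃ h : Y ⟶ Z, g ≫ h = f := by
  classical
  refine ⟨fun y => if hy : ∃ j, g j = some y then f hy.choose else none, ?_⟩
  funext j
  rw [comp_apply]
  cases hj : g j with
  | none => exact (hnone j hj).symm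
  | some y =>
    have hy : ∃ k, g k = some y := ⟨j, hj⟩
    rw [Option.bind_some, dif_pos hy, hinj _ _ _ hy.choose_spec hj]

end PtdFin

open PtdFin

theorem phiIns_psiDel {m : ℕ} (i : Fin (m + 1)) : phiIns i ≫ psiDel i = 𝟙 _ := by
  funext j
  exact finSuccEquiv'_succAbove i j

theorem psiDel_phiIns_apply {m : ℕ} (i j : Fin (m + 1)) :
    (psiDel i ≫ phiIns i) j = if j = i then none else some j := by
  rw [comp_apply]
  split_ifs with h
  · rw [h, psiDel, finSuccEquiv'_at]
    rfl
  · obtain ⟨k, rfl⟩ := Fin.exists_succAbove_eq h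
    rw [psiDel, finSuccEquiv'_succAbove]
    rfl

theorem psiDel_phiIns_comm {m : ℕ} (i j : Fin (m + 1)) :
    (psiDel i ≫ phiIns i) ≫ psiDel j ≫ phiIns j =
      (psiDel j ≫ phiIns j) ≫ psiDel i ≫ phiIns i := by
  funext k
  simp only [comp_apply (psiDel i ≫ phiIns i), comp_apply (psiDel j ≫ phiIns j),
    psiDel_phiIns_apply]
  split_ifs <;> simp_all

theorem psiSub_eq_none_iff {m : ℕ} (S : Finset (Fin m)) (j : Fin m) :
    psiSub S j = none ↔ j ∉ S := by
  unfold psiSub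
  split_ifs with h <;> simp [h]

theorem eq_of_psiSub_eq_some {m : ℕ} (S : Finset (Fin m)) (j k : Fin m) (y : Fin S.card)
    (hj : psiSub S j = some y) (hk : psiSub S k = some y) : j = k := by
  unfold psiSub at hj hk
  split_ifs at hj hk with hjS hkS
  have := (S.orderIsoOfFin rfl).symm.injective (Option.some_injective _ (hj.trans hk.symm))
  exact congrArg Subtype.val this

section Functor

variable {A : Type*} [Category A] [Abelian A] (G : PtdFin ⥤ A)

theorem kernelSubobject_map_psiSub_erase_le {m : ℕ} (i : Fin (m + 1)) :
    kernelSubobject (G.map (psiSub (Finset.univ.erase i))) ≤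
      kernelSubobject (G.map (psiDel i)) := by
  obtain ⟨h, hh⟩ :=
    exists_comp_eq (psiSub (Finset.univ.erase i)) (psiDel i) (eq_of_psiSub_eq_some _)
    fun j hj => by
      rw [psiSub_eq_none_iff, Finset.mem_erase, not_and] at hj
      rw [of_not_not (mt hj (by simp))]
      exact finSuccEquiv'_at i
  rw [← hh, G.map_comp]
  exact kernelSubobject_comp_le _ _

theorem kernelSubobject_map_psiDel_le_of_notMem {m : ℕ} {S : Finset (Fin (m + 1))}
    {i : Fin (m + 1)} (hi : i ∉ S) :
    kernelSubobject (G.map (psiDel i)) ≤ kernelSubobject (G.map (psiSub S)) := by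
  obtain ⟨h, hh⟩ := exists_comp_eq (psiDel i) (psiSub S)
    (fun j k y hj hk => (finSuccEquiv' i).injective (hj.trans hk.symm))
    fun j hj => by
      rw [psiDel, finSuccEquiv'_eq_none] at hj
      rwa [psiSub_eq_none_iff, ← hj]
  rw [← hh, G.map_comp]
  exact kernelSubobject_comp_le _ _

theorem primSubobject_eq_inf_kernelSubobject_psiDel (m : ℕ) :
    primSubobject G (m + 1) =
      Finset.univ.inf fun i : Fin (m + 1) => kernelSubobject (G.map (psiDel i)) := by
  apply le_antisymm
  · exact Finset.le_inf fun i _ =>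
      (Finset.inf_le (by simp)).trans (kernelSubobject_map_psiSub_erase_le G i)
  · refine Finset.le_inf fun S hS => ?_
    obtain ⟨i, hi⟩ : ∃ i, i ∉ S := by
      simpa [Finset.eq_univ_iff_forall] using (Finset.mem_filter.1 hS).2
    exact (Finset.inf_le (Finset.mem_univ i)).trans (kernelSubobject_map_psiDel_le_of_notMem G hi)

theorem sup_imageSubobject_map_phiIns_eq_top_iff (m : ℕ) :
    (Finset.univ.sup fun i : Fin (m + 1) => imageSubobject (G.map (phiIns i))) = ⊤ ↔
      (Finset.univ.inf fun i : Fin (m + 1) => kernelSubobject (G.map (psiDel i))) = ⊥ :=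
  sup_imageSubobject_eq_top_iff_inf_kernelSubobject_eq_bot _ _
    (fun i => by rw [← G.map_comp, phiIns_psiDel, G.map_id])
    (fun i j => by simp only [← G.map_comp, psiDel_phiIns_comm]) _

end Functor

/-- For a functor `G : FinSet* → A` to an abelian category and `n ≥ 0`, the following
are equivalent: (i) for `|I| > n`, `G({*} ⊔ I)` is the sum of the images of the
`G(φ_{I∖{i},I})`; (ii) for `|I| > n`, the intersection of the kernels of the
`G(ψ_{I∖{i},I})` is zero; (iii) `Prim(G)(I) = 0` for `|I| > n`. -/
theorem polynomial_functor_tfae {A : Type u} [Category.{v} A] [Abelian A]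
    (G : PtdFin ⥤ A) (n : ℕ) :
    ((∀ m : ℕ, n < m + 1 →
        (Finset.univ.sup fun i : Fin (m + 1) =>
          imageSubobject (G.map (phiIns i))) = ⊤) ↔
      (∀ m : ℕ, n < m + 1 →
        (Finset.univ.inf fun i : Fin (m + 1) =>
          kernelSubobject (G.map (psiDel i))) = ⊥)) ∧
    ((∀ m : ℕ, n < m + 1 →
        (Finset.univ.inf fun i : Fin (m + 1) =>
          kernelSubobject (G.map (psiDel i))) = ⊥) ↔
      (∀ m : ℕ, n < m + 1 → primSubobject G (m + 1) = ⊥)) :=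
  ⟨forall₂_congr fun m _ => sup_imageSubobject_map_phiIns_eq_top_iff G m,
    forall₂_congr fun m _ => by rw [primSubobject_eq_inf_kernelSubobject_psiDel]⟩
end

section
/- Let (A, m) be a Noetherian local ring and let p ⊂ A[x] be a prime ideal lying over m that is not equal to m·A[x] (i.e., not the generic point of the fiber over m). Then p is not an associated prime of A[x]. -/
/-!
A prime of `A[x]` strictly containing `m·A[x]` has nonzero image in `(A/m)[x]`; rescaling that
image to be monic and lifting it back gives a monic polynomial in the prime. Monic polynomials are
non-zerodivisors, and an associated prime consists of zerodivisors.
-/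

open Polynomial Submodule

theorem IsAssociatedPrime.not_isSMulRegular {R M : Type*} [CommSemiring R] [AddCommMonoid M]
    [Module R M] {I : Ideal R} {r : R} (h : IsAssociatedPrime I M) (hr : r ∈ I) :
    ¬IsSMulRegular M r := by
  obtain ⟨hI, x, rfl⟩ := h
  intro hreg
  obtain ⟨n, hn⟩ := hr
  rw [mem_colon_singleton, mem_bot] at hn
  have hx : x = 0 := hreg.pow n (hn.trans (smul_zero _).symm)
  apply hI.ne_top
  rw [hx, colon_singleton_zero, Ideal.radical_top]

theorem Polynomial.exists_monic_mem_of_map_C_lt {A : Type*} [CommRing A] {m : Ideal A}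
    [m.IsMaximal] {p : Ideal A[X]} (h : m.map C < p) : ∃ f ∈ p, f.Monic := by
  let := Ideal.Quotient.field m
  let π : A[X] →+* (A ⧸ m)[X] := mapRingHom (Ideal.Quotient.mk m)
  have hker : RingHom.ker π = m.map C := by rw [ker_mapRingHom, Ideal.mk_ker]
  obtain ⟨g, hgp, hgm⟩ := SetLike.exists_of_lt h
  have hg : π g ≠ 0 := fun h0 ↦ hgm (hker ▸ h0)
  obtain ⟨c, hc⟩ := Ideal.Quotient.mk_surjective (π g).leadingCoeff⁻¹
  have hmonic : (π (g * C c)).Monic := by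
    simpa [π, hc] using monic_mul_leadingCoeff_inv hg
  obtain ⟨f, hf, -, hfm⟩ := lifts_and_degree_eq_and_monic
    (map_surjective _ Ideal.Quotient.mk_surjective _) hmonic
  refine ⟨f, ?_, hfm⟩
  have hdiff : f - g * C c ∈ m.map C := hker ▸ (by simp [π, hf] : π (f - g * C c) = 0)
  simpa using p.add_mem (h.le hdiff) (p.mul_mem_right (C c) hgp)

theorem not_isAssociatedPrime_of_lying_over_not_generic_general
    {A : Type*} [CommRing A] [IsLocalRing A]
    (p : Ideal (Polynomial A))
    (hover : p.comap (Polynomial.C : A →+* Polynomial A) = IsLocalRing.maximalIdeal A)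
    (hne : p ≠ Ideal.map (Polynomial.C : A →+* Polynomial A) (IsLocalRing.maximalIdeal A)) :
    ¬ IsAssociatedPrime p (Polynomial A) := by
  intro hass
  have hlt : (IsLocalRing.maximalIdeal A).map C < p :=
    lt_of_le_of_ne (Ideal.map_le_iff_le_comap.mpr hover.ge) hne.symm
  obtain ⟨f, hfp, hfm⟩ := exists_monic_mem_of_map_C_lt hlt
  exact hass.not_isSMulRegular hfp hfm.isRegular.left.isSMulRegular

/-- For a Noetherian local ring `(A, m)`, a prime of `A[x]` lying over `m` which is not
the generic point of the fiber over `m` (i.e. not equal to `m·A[x]`) is not an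
associated prime of `A[x]`. -/
theorem not_isAssociatedPrime_of_lying_over_not_generic
    {A : Type*} [CommRing A] [IsNoetherianRing A] [IsLocalRing A]
    (p : Ideal (Polynomial A)) (hp : p.IsPrime)
    (hover : p.comap (Polynomial.C : A →+* Polynomial A) = IsLocalRing.maximalIdeal A)
    (hne : p ≠ Ideal.map (Polynomial.C : A →+* Polynomial A) (IsLocalRing.maximalIdeal A)) :
    ¬ IsAssociatedPrime p (Polynomial A) :=
  not_isAssociatedPrime_of_lying_over_not_generic_general p hover hne
end

section
/- Let A be a Noetherian commutative ring, f ∈ A, and let Â be the f-adic completion of A. Let M be an A-module that is set-theoretically supported on the vanishing locus of f (every element of M is annihilated by a power of f). Then the natural map M → Â ⊗_A M is an isomorphism. -/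
/-!
An element `m` killed by `I ^ n` is acted on by `Â` through `Â → R ⧸ I ^ n`. These actions are
compatible in `n`, so they define a bilinear map `Â × M → M` whose lift `Â ⊗ M → M` is a left
inverse of `m ↦ 1 ⊗ m`. It is also a right inverse: if `a ∈ R` lifts `x ∈ Â` modulo `I ^ n`, then
`x - a ∈ I ^ n • Â` because `I` is finitely generated, hence `x ⊗ m = a ⊗ m = 1 ⊗ a • m`.
-/

open TensorProduct Submodule

section

variable {R : Type*} [CommRing R] {I : Ideal R} {M : Type*} [AddCommGroup M] [Module R M]

theorem TensorProduct.tmul_eq_zero_of_mem_smul_top {N : Type*} [AddCommGroup N] [Module R N]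
    {J : Ideal R} {y : N} (hy : y ∈ J • (⊤ : Submodule R N)) {m : M}
    (hm : m ∈ torsionBySet R M J) : y ⊗ₜ[R] m = 0 := by
  refine smul_induction_on hy (fun r hr n _ ↦ ?_) fun y z hy hz ↦ ?_
  · rw [smul_tmul, (mem_torsionBySet_iff _ _).mp hm ⟨r, hr⟩, tmul_zero]
  · rw [add_tmul, hy, hz, add_zero]

theorem Submodule.mem_torsionBySet_pow_of_le {n n' : ℕ} (h : n ≤ n') {m : M}
    (hm : m ∈ torsionBySet R M ↑(I ^ n)) : m ∈ torsionBySet R M ↑(I ^ n') :=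
  torsionBySet_le_torsionBySet_of_subset (Ideal.pow_le_pow_right h) hm

namespace AdicCompletion

variable (I) in
def quotSMul (n : ℕ) (m : M) (hm : m ∈ torsionBySet R M ↑(I ^ n)) :
    R ⧸ (I ^ n • ⊤ : Submodule R R) →ₗ[R] M :=
  (I ^ n • ⊤ : Submodule R R).liftQ (LinearMap.toSpanSingleton R M m) fun r hr ↦ by
    rw [smul_eq_mul, Ideal.mul_top] at hr
    exact (mem_torsionBySet_iff _ _).mp hm ⟨r, hr⟩

section quotSMul

variable {n : ℕ} {m m' : M} (hm : m ∈ torsionBySet R M ↑(I ^ n))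

@[simp]
theorem quotSMul_mk (a : R) : quotSMul I n m hm (Submodule.Quotient.mk a) = a • m :=
  rfl

theorem quotSMul_add (hm' : m' ∈ torsionBySet R M ↑(I ^ n))
    (y : R ⧸ (I ^ n • ⊤ : Submodule R R)) :
    quotSMul I n (m + m') (add_mem hm hm') y = quotSMul I n m hm y + quotSMul I n m' hm' y := by
  induction y using Quotient.induction_on with
  | H a => simp only [quotSMul_mk, smul_add]

theorem quotSMul_smul (c : R) (y : R ⧸ (I ^ n • ⊤ : Submodule R R)) :
    quotSMul I n (c • m) (smul_mem _ c hm) y = c • quotSMul I n m hm y := by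
  induction y using Quotient.induction_on with
  | H a => simp only [quotSMul_mk, smul_comm a c]

theorem quotSMul_val_eq_of_le {n' : ℕ} (h : n ≤ n') (hm' : m ∈ torsionBySet R M ↑(I ^ n'))
    (x : AdicCompletion I R) : quotSMul I n m hm (x.val n) = quotSMul I n' m hm' (x.val n') := by
  rw [← x.prop h]
  induction x.val n' using Quotient.induction_on with
  | H a => rfl

theorem quotSMul_val_eq {n' : ℕ} (hm' : m ∈ torsionBySet R M ↑(I ^ n'))
    (x : AdicCompletion I R) :
    quotSMul I n m hm (x.val n) = quotSMul I n' m hm' (x.val n') := by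
  rcases le_total n n' with h | h
  · exact quotSMul_val_eq_of_le hm h hm' x
  · exact (quotSMul_val_eq_of_le hm' h hm x).symm

end quotSMul

section torsionSMul

variable (hM : ∀ m : M, ∃ n, m ∈ torsionBySet R M ↑(I ^ n))

variable (I) in
noncomputable def torsionSMul : AdicCompletion I R →ₗ[R] M →ₗ[R] M :=
  LinearMap.mk₂ R (fun x m ↦ quotSMul I _ m (hM m).choose_spec (x.val (hM m).choose))
    (fun x y m ↦ by simp only [val_add_apply, map_add])
    (fun c x m ↦ by simp only [val_smul_apply, map_smul])
    (fun x m m' ↦ by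
      have hm := mem_torsionBySet_pow_of_le (le_max_left _ (hM m').choose) (hM m).choose_spec
      have hm' := mem_torsionBySet_pow_of_le (le_max_right (hM m).choose _) (hM m').choose_spec
      rw [quotSMul_val_eq _ (add_mem hm hm'), quotSMul_add,
        quotSMul_val_eq (hM m).choose_spec hm, quotSMul_val_eq (hM m').choose_spec hm'])
    (fun c x m ↦ by
      rw [quotSMul_val_eq _ (smul_mem _ c (hM m).choose_spec), quotSMul_smul])

theorem torsionSMul_apply {n : ℕ} {m : M} (hm : m ∈ torsionBySet R M ↑(I ^ n))
    (x : AdicCompletion I R) : torsionSMul I hM x m = quotSMul I n m hm (x.val n) :=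
  quotSMul_val_eq (hM m).choose_spec hm x

theorem torsionSMul_one (m : M) : torsionSMul I hM 1 m = m := by
  rw [torsionSMul_apply hM (hM m).choose_spec, val_one]
  exact one_smul R m

theorem tmul_eq_one_tmul_torsionSMul (hI : I.FG) (x : AdicCompletion I R) (m : M) :
    x ⊗ₜ[R] m = (1 : AdicCompletion I R) ⊗ₜ[R] torsionSMul I hM x m := by
  obtain ⟨n, hm⟩ := hM m
  obtain ⟨a, ha⟩ := Submodule.Quotient.mk_surjective _ (x.val n)
  rw [torsionSMul_apply hM hm, ← ha, quotSMul_mk, ← smul_tmul, ← sub_eq_zero, ← sub_tmul]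
  refine tmul_eq_zero_of_mem_smul_top ?_ hm
  rw [pow_smul_top_eq_ker_eval hI, LinearMap.mem_ker, map_sub, map_smul, eval_apply, eval_apply,
    val_one, ← ha, sub_eq_zero]
  exact congrArg _ (mul_one a).symm

end torsionSMul

theorem mk_one_bijective_of_torsion (hI : I.FG)
    (hM : ∀ m : M, ∃ n, m ∈ torsionBySet R M ↑(I ^ n)) :
    Function.Bijective (TensorProduct.mk R (AdicCompletion I R) M 1) := by
  refine Function.bijective_iff_has_inverse.mpr
    ⟨TensorProduct.lift (torsionSMul I hM), fun m ↦ ?_, fun t ↦ ?_⟩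
  · rw [TensorProduct.mk_apply, TensorProduct.lift.tmul, torsionSMul_one]
  · induction t using TensorProduct.induction_on with
    | zero => rw [_root_.map_zero, _root_.map_zero]
    | tmul x m =>
      rw [TensorProduct.lift.tmul, TensorProduct.mk_apply, ← tmul_eq_one_tmul_torsionSMul hM hI]
    | add t t' ht ht' => rw [_root_.map_add, _root_.map_add, ht, ht']

end AdicCompletion

end

theorem supported_module_tensor_adicCompletion_bijective_general
    {A : Type*} [CommRing A] (f : A)
    (M : Type*) [AddCommGroup M] [Module A M]
    (hM : ∀ m : M, ∃ n : ℕ, f ^ n • m = 0) :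
    Function.Bijective
      ⇑(TensorProduct.mk A (AdicCompletion (Ideal.span {f}) A) M 1) := by
  refine AdicCompletion.mk_one_bijective_of_torsion (fg_span_singleton f) fun m ↦ ?_
  obtain ⟨n, hn⟩ := hM m
  exact ⟨n, by rwa [Ideal.span_singleton_pow, torsionBySet_span_singleton_eq]⟩

/-- Beauville–Laszlo Lemme 1: if `A` is Noetherian, `f ∈ A`, and `M` is an `A`-module
set-theoretically supported on `V(f)` (every element is killed by a power of `f`), then
the natural map `M → Â ⊗_A M` into the `f`-adic completion is an isomorphism. -/
theorem supported_module_tensor_adicCompletion_bijective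
    {A : Type*} [CommRing A] [IsNoetherianRing A] (f : A)
    (M : Type*) [AddCommGroup M] [Module A M]
    (hM : ∀ m : M, ∃ n : ℕ, f ^ n • m = 0) :
    Function.Bijective
      ⇑(TensorProduct.mk A (AdicCompletion (Ideal.span {f}) A) M 1) :=
  supported_module_tensor_adicCompletion_bijective_general f M hM
end

section
/- Let A be a Noetherian commutative ring, f ∈ A, and let Â be the f-adic completion of A. Let Ann_A(f) ⊆ A denote the ideal of elements annihilated by some power of f, and define Ann_Â(f) ⊆ Â similarly. Then the natural map A → Â induces an isomorphism Ann_A(f) ≅ Ann_Â(f). -/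
/-
Since `A` is Noetherian, the chain `ker f ⊆ ker f² ⊆ ⋯` stabilises, so `Ann_A(f) = ker f^N` for
some `N`, and then `ker f^N ∩ f^N A = 0`. This gives injectivity at once. For surjectivity, an
element `b` of `Â` killed by `f^n` has, at each level `k`, a representative in `ker f^N`
(correct a lift of `b` at level `k + n` by a multiple of `f^k`); two such representatives agree
modulo `f^N`, hence are equal, so a single `a ∈ ker f^N` represents `b` at every level.
-/

namespace AdicCompletion

variable {R : Type*} [CommRing R] {I : Ideal R}

theorem algebraMap_val_eq_algebraMap_val_iff (a a' : R) (k : ℕ) :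
    (algebraMap R (AdicCompletion I R) a).val k = (algebraMap R (AdicCompletion I R) a').val k ↔
      a - a' ∈ I ^ k := by
  rw [algebraMap_apply, algebraMap_apply, of_apply, of_apply, Submodule.mkQ_apply,
    Submodule.mkQ_apply, Submodule.Quotient.eq, smul_eq_mul, Ideal.mul_top]
  rfl

theorem exists_algebraMap_val_eq (b : AdicCompletion I R) (k : ℕ) :
    ∃ a : R, (algebraMap R (AdicCompletion I R) a).val k = b.val k :=
  Ideal.Quotient.mk_surjective (b.val k)

theorem val_eq_of_le {M : Type*} [AddCommGroup M] [Module R M] {x y : AdicCompletion I M}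
    {m n : ℕ} (hmn : m ≤ n) (h : x.val n = y.val n) : x.val m = y.val m := by
  rw [← x.property hmn, ← y.property hmn, h]

end AdicCompletion

theorem exists_pow_mul_eq_zero_of_pow_mul_eq_zero {A : Type*} [CommRing A] [IsNoetherianRing A]
    (f : A) :
    ∃ N : ℕ, ∀ n (c : A), f ^ n * c = 0 → f ^ N * c = 0 := by
  obtain ⟨N, hN⟩ := (LinearMap.mulLeft A f).eventually_iSup_ker_pow_eq.exists
  refine ⟨N, fun n c hc => ?_⟩
  have hker : c ∈ LinearMap.ker (LinearMap.mulLeft A f ^ N) :=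
    hN ▸ Submodule.mem_iSup_of_mem n (by simpa [LinearMap.pow_mulLeft] using hc)
  simpa [LinearMap.pow_mulLeft] using hker

section PowerTorsion

variable {A : Type*} [CommRing A] {f : A} {N : ℕ}

theorem eq_zero_of_pow_mul_eq_zero_of_pow_dvd (hN : ∀ n (c : A), f ^ n * c = 0 → f ^ N * c = 0)
    {x : A} (hx : f ^ N * x = 0) (hdvd : f ^ N ∣ x) : x = 0 := by
  obtain ⟨c, rfl⟩ := hdvd
  have hc : f ^ N * c = 0 := hN (N + N) c (by rw [pow_add, mul_assoc, hx])
  rw [hc]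

theorem algebraMap_val_eq_algebraMap_val_iff_pow_dvd (a a' : A) (k : ℕ) :
    (algebraMap A (AdicCompletion (Ideal.span {f}) A) a).val k =
        (algebraMap A (AdicCompletion (Ideal.span {f}) A) a').val k ↔ f ^ k ∣ a - a' := by
  rw [AdicCompletion.algebraMap_val_eq_algebraMap_val_iff, Ideal.span_singleton_pow,
    Ideal.mem_span_singleton]

theorem exists_pow_mul_eq_zero_and_algebraMap_val_eq
    (hN : ∀ n (c : A), f ^ n * c = 0 → f ^ N * c = 0) {b : AdicCompletion (Ideal.span {f}) A}
    {n : ℕ} (hb : algebraMap A (AdicCompletion (Ideal.span {f}) A) f ^ n * b = 0) (k : ℕ) :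
    ∃ a : A, f ^ N * a = 0 ∧
      (algebraMap A (AdicCompletion (Ideal.span {f}) A) a).val k = b.val k := by
  obtain ⟨x, hx⟩ := AdicCompletion.exists_algebraMap_val_eq b (k + n)
  have hdvd : f ^ (k + n) ∣ f ^ n * x := by
    rw [← sub_zero (f ^ n * x), ← algebraMap_val_eq_algebraMap_val_iff_pow_dvd, map_zero,
      map_mul, map_pow, AdicCompletion.val_mul, hx, ← AdicCompletion.val_mul, hb]
  obtain ⟨c, hc⟩ := hdvd
  refine ⟨x - f ^ k * c, hN n _ (by linear_combination hc), ?_⟩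
  rw [← AdicCompletion.val_eq_of_le (Nat.le_add_right k n) hx,
    algebraMap_val_eq_algebraMap_val_iff_pow_dvd]
  exact ⟨-c, by ring⟩

end PowerTorsion

section Noetherian

variable {A : Type*} [CommRing A] [IsNoetherianRing A] (f : A)

theorem injOn_algebraMap_adicCompletion_powerTorsion :
    Set.InjOn (algebraMap A (AdicCompletion (Ideal.span {f}) A))
      {a : A | ∃ n : ℕ, f ^ n * a = 0} := by
  obtain ⟨N, hN⟩ := exists_pow_mul_eq_zero_of_pow_mul_eq_zero f
  rintro a ⟨n, ha⟩ a' ⟨n', ha'⟩ heq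
  rw [← sub_eq_zero]
  refine eq_zero_of_pow_mul_eq_zero_of_pow_dvd hN ?_ ?_
  · rw [mul_sub, hN n a ha, hN n' a' ha', sub_zero]
  · rw [← algebraMap_val_eq_algebraMap_val_iff_pow_dvd, heq]

theorem surjOn_algebraMap_adicCompletion_powerTorsion :
    Set.SurjOn (algebraMap A (AdicCompletion (Ideal.span {f}) A))
      {a : A | ∃ n : ℕ, f ^ n * a = 0}
      {b : AdicCompletion (Ideal.span {f}) A |
        ∃ n : ℕ, algebraMap A (AdicCompletion (Ideal.span {f}) A) f ^ n * b = 0} := by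
  obtain ⟨N, hN⟩ := exists_pow_mul_eq_zero_of_pow_mul_eq_zero f
  rintro b ⟨n, hb⟩
  obtain ⟨a, ha, haN⟩ := exists_pow_mul_eq_zero_and_algebraMap_val_eq hN hb N
  refine ⟨a, ⟨N, ha⟩, AdicCompletion.ext fun k => ?_⟩
  obtain ⟨a', ha', ha'k⟩ := exists_pow_mul_eq_zero_and_algebraMap_val_eq hN hb (k + N)
  have heq : a' = a := by
    rw [← sub_eq_zero]
    refine eq_zero_of_pow_mul_eq_zero_of_pow_dvd hN (by rw [mul_sub, ha, ha', sub_zero]) ?_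
    rw [← algebraMap_val_eq_algebraMap_val_iff_pow_dvd, haN,
      AdicCompletion.val_eq_of_le (Nat.le_add_left N k) ha'k]
  exact AdicCompletion.val_eq_of_le (Nat.le_add_right k N) (heq ▸ ha'k)

end Noetherian

/-- For `A` Noetherian and `f ∈ A`, the natural map `A → Â` to the `f`-adic completion
restricts to a bijection between the ideal of elements of `A` annihilated by a power of `f`
and the ideal of elements of `Â` annihilated by a power of (the image of) `f`. -/
theorem annihilator_powers_bijOn_adicCompletion
    {A : Type*} [CommRing A] [IsNoetherianRing A] (f : A) :
    Set.BijOn (algebraMap A (AdicCompletion (Ideal.span {f}) A))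
      {a : A | ∃ n : ℕ, f ^ n * a = 0}
      {b : AdicCompletion (Ideal.span {f}) A |
        ∃ n : ℕ, algebraMap A (AdicCompletion (Ideal.span {f}) A) f ^ n * b = 0} :=
  ⟨fun _ ⟨n, ha⟩ => ⟨n, by rw [← map_pow, ← map_mul, ha, map_zero]⟩,
    injOn_algebraMap_adicCompletion_powerTorsion f,
    surjOn_algebraMap_adicCompletion_powerTorsion f⟩
end

section
/- Let Y be a scheme over a field k equipped with an étale morphism f : Y → 𝔸^n. For each finite set I, there is an isomorphism between the formal completion of Y^{{0} ⊔ I} along the small diagonal Y and Y × (D^n)^I, where D^n is the formal completion of 𝔸^n at the origin, and these isomorphisms are functorial in I. -/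
/-- The inclusion of the `i`-th tensor factor: `b ↦ 1 ⊗ ⋯ ⊗ b ⊗ ⋯ ⊗ 1` in
`B^{⊗ Option I}`, the ring of functions of `Y^{{0} ⊔ I}` for affine `Y = Spec B`. -/
noncomputable def inclFactor (k B : Type) [CommRing k] [CommRing B] [Algebra k B]
    {I : Type} [DecidableEq I] (i : Option I) (b : B) :
    PiTensorProduct k fun _ : Option I => B :=
  PiTensorProduct.tprod k (Function.update (fun _ : Option I => (1 : B)) i b)

/-- The ideal of the small diagonal `Y ↪ Y^{{0} ⊔ I}`, generated by the differences
`(1 ⊗ ⋯ ⊗ b ⊗ ⋯ ⊗ 1) - (b ⊗ 1 ⊗ ⋯ ⊗ 1)`. -/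
noncomputable def diagIdeal (k B : Type) [CommRing k] [CommRing B] [Algebra k B]
    (I : Type) [DecidableEq I] : Ideal (PiTensorProduct k fun _ : Option I => B) :=
  Ideal.span {x | ∃ (i : Option I) (b : B),
    x = inclFactor k B i b - inclFactor k B none b}

/-- The ideal of the origin section `Y ↪ Y × (𝔸^n)^I`, generated by the coordinates
`x_{i,m}`. -/
noncomputable def originIdeal (B : Type) [CommRing B] (I : Type) (n : ℕ) :
    Ideal (MvPolynomial (I × Fin n) B) :=
  Ideal.span (Set.range fun v : I × Fin n =>
    (MvPolynomial.X v : MvPolynomial (I × Fin n) B))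

/-!
Write `f_m ∈ B` for the coordinates of the étale map and `M` for the ideal of the origin. The
`0`-th tensor factor goes to the constants of `B[X]/M^{d+1}`, and the `i`-th factor to a lift
`B → B[X]/M^{d+1}` of the translation `x_m ↦ f_m + X_{i,m}` that is congruent to the constants
modulo `M`. Such a lift exists because `B` is formally smooth over `k[x]`, and it is unique because
`B` is formally unramified and `M` is nilpotent in `B[X]/M^{d+1}`. Uniqueness shows that
`X_{i,m} ↦ 1 ⊗ f_m - f_m ⊗ 1` is a left inverse modulo `J^{d+1}`, and that the maps commute with
truncation and with maps of index sets. Surjectivity holds because `X_{i,m}` is the image of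
`1 ⊗ f_m - f_m ⊗ 1`.
-/

open MvPolynomial

section LiftModNilpotent

variable {R A B C C' : Type*} [CommRing R] [CommRing A] [CommRing B] [CommRing C] [CommRing C']
  [Algebra R A] [Algebra A B] [Algebra R B] [IsScalarTower R A B] [Algebra R C] [Algebra R C']

def IsLiftMod (N : Ideal C) (τ : A →ₐ[R] C) (ι g : B →ₐ[R] C) : Prop :=
  g.comp (IsScalarTower.toAlgHom R A B) = τ ∧ ∀ b, g b - ι b ∈ N

theorem exists_isLiftMod [Algebra.FormallySmooth A B] {N : Ideal C} (hN : IsNilpotent N)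
    (τ : A →ₐ[R] C) (ι : B →ₐ[R] C)
    (h : (Ideal.Quotient.mkₐ R N).comp τ
      = ((Ideal.Quotient.mkₐ R N).comp ι).comp (IsScalarTower.toAlgHom R A B)) :
    ∃ g, IsLiftMod N τ ι g := by
  let : Algebra A C := τ.toRingHom.toAlgebra
  have : IsScalarTower R A C := .of_algebraMap_eq' τ.comp_algebraMap.symm
  let g₀ : B →ₐ[A] C ⧸ N :=
    { (Ideal.Quotient.mkₐ R N).comp ι with
      commutes' := fun a => (DFunLike.congr_fun h a).symm }
  refine ⟨(Algebra.FormallySmooth.lift N hN g₀).restrictScalars R, ?_, fun b => ?_⟩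
  · ext a
    exact (Algebra.FormallySmooth.lift N hN g₀).commutes a
  · exact Ideal.Quotient.eq.mp (Algebra.FormallySmooth.mk_lift N hN g₀ b)

theorem IsLiftMod.unique [Algebra.FormallyUnramified A B] {N : Ideal C} (hN : IsNilpotent N)
    {τ : A →ₐ[R] C} {ι g₁ g₂ : B →ₐ[R] C} (h₁ : IsLiftMod N τ ι g₁) (h₂ : IsLiftMod N τ ι g₂) :
    g₁ = g₂ := by
  let : Algebra A C := τ.toRingHom.toAlgebra
  let overA (g : B →ₐ[R] C) (hg : g.comp (IsScalarTower.toAlgHom R A B) = τ) : B →ₐ[A] C :=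
    { g with commutes' := fun a => DFunLike.congr_fun hg a }
  have h := Algebra.FormallyUnramified.lift_unique N hN (overA g₁ h₁.1) (overA g₂ h₂.1) <| by
    ext b
    exact Ideal.Quotient.eq.mpr (sub_sub_sub_cancel_right (g₁ b) (g₂ b) (ι b) ▸
      sub_mem (h₁.2 b) (h₂.2 b))
  ext b
  exact DFunLike.congr_fun h b

theorem IsLiftMod.apply_algebraMap {N : Ideal C} {τ : A →ₐ[R] C} {ι g : B →ₐ[R] C}
    (h : IsLiftMod N τ ι g) (a : A) : g (algebraMap A B a) = τ a :=
  DFunLike.congr_fun h.1 a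

theorem IsLiftMod.comp {N : Ideal C} {N' : Ideal C'} {τ : A →ₐ[R] C} {ι g : B →ₐ[R] C}
    (h : IsLiftMod N τ ι g) (φ : C →ₐ[R] C') (hφ : N ≤ N'.comap φ) :
    IsLiftMod N' (φ.comp τ) (φ.comp ι) (φ.comp g) :=
  ⟨by rw [AlgHom.comp_assoc, h.1], fun b => by simpa [map_sub] using hφ (h.2 b)⟩

end LiftModNilpotent

theorem Ideal.map_mk_pow_pow_eq_bot {R : Type*} [CommRing R] (I : Ideal R) (m : ℕ) :
    I.map (Ideal.Quotient.mk (I ^ m)) ^ m = ⊥ := by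
  rw [← Ideal.map_pow, Ideal.map_quotient_self]

theorem Ideal.pow_le_ker_of_le_comap {R S F : Type*} [CommRing R] [CommRing S] [FunLike F R S]
    [RingHomClass F R S] {f : F} {I : Ideal R} {K : Ideal S} {m : ℕ} (h : I ≤ K.comap f)
    (hK : K ^ m = ⊥) : I ^ m ≤ RingHom.ker f := by
  rw [RingHom.ker_eq_comap_bot, ← hK]
  exact (Ideal.pow_right_mono h m).trans (Ideal.le_comap_pow f m)

namespace DiagonalCompletion

noncomputable def inclFactorAlgHom (k B : Type) [CommRing k] [CommRing B] [Algebra k B]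
    {I : Type} [DecidableEq I] (j : Option I) : B →ₐ[k] PiTensorProduct k fun _ : Option I => B :=
  PiTensorProduct.singleAlgHom (A := fun _ : Option I => B) j

@[simp]
theorem inclFactorAlgHom_apply (k B : Type) [CommRing k] [CommRing B] [Algebra k B]
    {I : Type} [DecidableEq I] (j : Option I) (b : B) :
    inclFactorAlgHom k B j b = inclFactor k B j b :=
  rfl

theorem inclFactorAlgHom_ext {k B : Type} [CommRing k] [CommRing B] [Algebra k B]
    {I : Type} [Finite I] [DecidableEq I] {S : Type*} [Semiring S] [Algebra k S]
    {f g : (PiTensorProduct k fun _ : Option I => B) →ₐ[k] S}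
    (h : ∀ j, f.comp (inclFactorAlgHom k B j) = g.comp (inclFactorAlgHom k B j)) : f = g :=
  PiTensorProduct.algHom_ext h

noncomputable abbrev Trunc (B : Type) [CommRing B] (I : Type) (n d : ℕ) : Type :=
  MvPolynomial (I × Fin n) B ⧸ originIdeal B I n ^ (d + 1)

noncomputable def truncIdeal (B : Type) [CommRing B] (I : Type) (n d : ℕ) : Ideal (Trunc B I n d) :=
  (originIdeal B I n).map (Ideal.Quotient.mk _)

section Trunc

variable {k B : Type} [CommRing k] [CommRing B] [Algebra k B] {I : Type} {n d : ℕ}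

theorem truncIdeal_isNilpotent : IsNilpotent (truncIdeal B I n d) :=
  ⟨d + 1, Ideal.map_mk_pow_pow_eq_bot _ _⟩

theorem mk_X_mem_truncIdeal (v : I × Fin n) :
    Ideal.Quotient.mk _ (X v) ∈ truncIdeal B I n d :=
  Ideal.mem_map_of_mem _ (Ideal.subset_span ⟨v, rfl⟩)

theorem originIdeal_le_comap {S F : Type*} [CommRing S] [FunLike F (MvPolynomial (I × Fin n) B) S]
    [RingHomClass F (MvPolynomial (I × Fin n) B) S] {f : F} {K : Ideal S}
    (hf : ∀ v, f (X v) ∈ K) : originIdeal B I n ≤ K.comap f :=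
  Ideal.span_le.mpr fun _ ⟨v, hv⟩ => hv ▸ hf v

variable (d) in
noncomputable def Trunc.lift {S : Type*} [CommRing S] [Algebra k S]
    (f : MvPolynomial (I × Fin n) B →ₐ[k] S) (K : Ideal S) (hK : K ^ (d + 1) = ⊥)
    (hf : ∀ v, f (X v) ∈ K) : Trunc B I n d →ₐ[k] S :=
  Ideal.Quotient.liftₐ _ f fun _ ha => Ideal.pow_le_ker_of_le_comap (originIdeal_le_comap hf) hK ha

variable {S : Type*} [CommRing S] [Algebra k S] {f : MvPolynomial (I × Fin n) B →ₐ[k] S}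
  {K : Ideal S} {hK : K ^ (d + 1) = ⊥} {hf : ∀ v, f (X v) ∈ K}

theorem truncIdeal_le_comap_lift : truncIdeal B I n d ≤ K.comap (Trunc.lift d f K hK hf) :=
  Ideal.map_le_iff_le_comap.mpr (originIdeal_le_comap hf)

end Trunc

section Translate

variable (k : Type) [CommRing k] (n : ℕ) (B : Type) [CommRing B] [Algebra k B]
  [Algebra (MvPolynomial (Fin n) k) B] {I : Type} (d : ℕ)

noncomputable def translate (i : I) : MvPolynomial (Fin n) k →ₐ[k] Trunc B I n d :=
  aeval fun m => algebraMap B _ (algebraMap (MvPolynomial (Fin n) k) B (X m))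
    + Ideal.Quotient.mk _ (X (i, m))

variable [IsScalarTower k (MvPolynomial (Fin n) k) B]

theorem mk_comp_translate (i : I) :
    (Ideal.Quotient.mkₐ k (truncIdeal B I n d)).comp (translate k n B d i)
      = ((Ideal.Quotient.mkₐ k _).comp (IsScalarTower.toAlgHom k B _)).comp
          (IsScalarTower.toAlgHom k (MvPolynomial (Fin n) k) B) := by
  ext m
  simp [translate, Ideal.Quotient.eq_zero_iff_mem.mpr (mk_X_mem_truncIdeal (i, m))]

variable [Algebra.FormallySmooth (MvPolynomial (Fin n) k) B]

noncomputable def shiftedFactor (i : I) : B →ₐ[k] Trunc B I n d :=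
  (exists_isLiftMod truncIdeal_isNilpotent _ _ (mk_comp_translate k n B d i)).choose

theorem isLiftMod_shiftedFactor (i : I) :
    IsLiftMod (truncIdeal B I n d) (translate k n B d i) (IsScalarTower.toAlgHom k B _)
      (shiftedFactor k n B d i) :=
  (exists_isLiftMod truncIdeal_isNilpotent _ _ (mk_comp_translate k n B d i)).choose_spec

noncomputable def factor (j : Option I) : B →ₐ[k] Trunc B I n d :=
  j.elim (IsScalarTower.toAlgHom k B _) (shiftedFactor k n B d)

end Translate

section TruncMap

variable (k : Type) [CommRing k] {n : ℕ} {B : Type} [CommRing B] [Algebra k B] {I I' : Type}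

noncomputable def truncMap (σ : I → I') {d₁ d₂ : ℕ} (h : d₂ ≤ d₁) :
    Trunc B I n d₁ →ₐ[k] Trunc B I' n d₂ :=
  Trunc.lift d₁ ((Ideal.Quotient.mkₐ k _).comp ((rename (Prod.map σ id)).restrictScalars k))
    (truncIdeal B I' n d₂)
    (le_bot_iff.mp ((Ideal.pow_le_pow_right (by omega)).trans (Ideal.map_mk_pow_pow_eq_bot _ _).le))
    fun v => by simpa using mk_X_mem_truncIdeal (Prod.map σ id v)

variable (σ : I → I') {d₁ d₂ : ℕ} (h : d₂ ≤ d₁)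

theorem truncMap_mk (q : MvPolynomial (I × Fin n) B) :
    truncMap k σ h (Ideal.Quotient.mk _ q) = Ideal.Quotient.mk _ (rename (Prod.map σ id) q) :=
  rfl

theorem truncMap_algebraMap (b : B) :
    truncMap k σ h (algebraMap B (Trunc B I n d₁) b) = algebraMap B (Trunc B I' n d₂) b :=
  congrArg (Ideal.Quotient.mk _) (rename_C _ b)

theorem truncMap_comp_algebraMap :
    (truncMap k σ h).comp (IsScalarTower.toAlgHom k B (Trunc B I n d₁))
      = IsScalarTower.toAlgHom k B (Trunc B I' n d₂) :=
  AlgHom.ext (truncMap_algebraMap k σ h)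

variable [Algebra (MvPolynomial (Fin n) k) B]

theorem truncMap_comp_translate (i : I) :
    (truncMap k σ h).comp (translate k n B d₁ i) = translate k n B d₂ (σ i) := by
  ext m
  simp [translate, truncMap_mk, truncMap_algebraMap]

variable [IsScalarTower k (MvPolynomial (Fin n) k) B]
  [Algebra.FormallyEtale (MvPolynomial (Fin n) k) B]

theorem truncMap_comp_shiftedFactor (i : I) :
    (truncMap k σ h).comp (shiftedFactor k n B d₁ i) = shiftedFactor k n B d₂ (σ i) := by
  have hσ := (isLiftMod_shiftedFactor k n B d₁ i).comp (truncMap k σ h) truncIdeal_le_comap_lift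
  rw [truncMap_comp_translate, truncMap_comp_algebraMap] at hσ
  exact hσ.unique truncIdeal_isNilpotent (isLiftMod_shiftedFactor k n B d₂ (σ i))

theorem truncMap_comp_factor (j : Option I) :
    (truncMap k σ h).comp (factor k n B d₁ j) = factor k n B d₂ (j.map σ) := by
  cases j with
  | none => exact truncMap_comp_algebraMap k σ h
  | some i => exact truncMap_comp_shiftedFactor k σ h i

end TruncMap

section Tensor

variable (k : Type) [CommRing k] (n : ℕ) (B : Type) [CommRing B] [Algebra k B]
  [Algebra (MvPolynomial (Fin n) k) B] [IsScalarTower k (MvPolynomial (Fin n) k) B]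
  (I : Type) [Fintype I] [DecidableEq I] (d : ℕ)

section Smooth

variable [Algebra.FormallySmooth (MvPolynomial (Fin n) k) B]

noncomputable def diagToTrunc : (PiTensorProduct k fun _ : Option I => B) →ₐ[k] Trunc B I n d :=
  PiTensorProduct.liftAlgHom
    ((MultilinearMap.mkPiAlgebra k (Option I) _).compLinearMap
      fun j => (factor k n B d j).toLinearMap)
    (by simp) (by simp [Finset.prod_mul_distrib])

theorem diagToTrunc_inclFactor (j : Option I) (b : B) :
    diagToTrunc k n B I d (inclFactor k B j b) = factor k n B d j b := by
  simp [diagToTrunc, inclFactor, Function.update_apply, apply_ite]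

theorem diagToTrunc_comp_inclFactorAlgHom (j : Option I) :
    (diagToTrunc k n B I d).comp (inclFactorAlgHom k B j) = factor k n B d j :=
  AlgHom.ext (diagToTrunc_inclFactor k n B I d j)

theorem diagToTrunc_inclFactor_sub (i : I) (b : B) :
    diagToTrunc k n B I d (inclFactor k B (some i) b - inclFactor k B none b)
      = shiftedFactor k n B d i b - algebraMap B _ b := by
  rw [map_sub, diagToTrunc_inclFactor, diagToTrunc_inclFactor]
  rfl

theorem diagToTrunc_inclFactor_coord_sub (i : I) (m : Fin n) :
    diagToTrunc k n B I d (inclFactor k B (some i) (algebraMap (MvPolynomial (Fin n) k) B (X m))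
        - inclFactor k B none (algebraMap (MvPolynomial (Fin n) k) B (X m)))
      = Ideal.Quotient.mk _ (X (i, m)) := by
  rw [diagToTrunc_inclFactor_sub, (isLiftMod_shiftedFactor k n B d i).apply_algebraMap,
    translate, aeval_X, add_sub_cancel_left]

theorem diagToTrunc_surjective : Function.Surjective (diagToTrunc k n B I d) := by
  rintro ⟨p⟩
  induction p using MvPolynomial.induction_on with
  | C b => exact ⟨inclFactor k B none b, diagToTrunc_inclFactor k n B I d none b⟩
  | add p q hp hq =>
    obtain ⟨s, hs⟩ := hp
    obtain ⟨t, ht⟩ := hq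
    exact ⟨s + t, by rw [map_add, hs, ht]; rfl⟩
  | mul_X p v hp =>
    obtain ⟨s, hs⟩ := hp
    refine ⟨s * (inclFactor k B (some v.1) (algebraMap (MvPolynomial (Fin n) k) B (X v.2))
        - inclFactor k B none (algebraMap (MvPolynomial (Fin n) k) B (X v.2))), ?_⟩
    rw [map_mul, hs, diagToTrunc_inclFactor_coord_sub]
    rfl

theorem diagIdeal_le_comap_diagToTrunc :
    diagIdeal k B I ≤ (truncIdeal B I n d).comap (diagToTrunc k n B I d) := by
  refine Ideal.span_le.mpr ?_
  rintro _ ⟨j, b, rfl⟩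
  cases j with
  | none => simp
  | some i => simpa [diagToTrunc_inclFactor_sub] using (isLiftMod_shiftedFactor k n B d i).2 b

end Smooth

variable [Algebra.FormallyEtale (MvPolynomial (Fin n) k) B] {I}

theorem diagToTrunc_eq_mk_of_succ {t : PiTensorProduct k fun _ : Option I => B}
    {q : MvPolynomial (I × Fin n) B} (h : diagToTrunc k n B I (d + 1) t = Ideal.Quotient.mk _ q) :
    diagToTrunc k n B I d t = Ideal.Quotient.mk _ q := by
  have hd : (truncMap k id (Nat.le_succ d)).comp (diagToTrunc k n B I (d + 1))
      = diagToTrunc k n B I d :=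
    inclFactorAlgHom_ext fun j => by
      rw [AlgHom.comp_assoc, diagToTrunc_comp_inclFactorAlgHom, diagToTrunc_comp_inclFactorAlgHom,
        truncMap_comp_factor, Option.map_id_fun, id]
  rw [← hd, AlgHom.comp_apply, h, truncMap_mk, Prod.map_id, rename_id_apply]

theorem diagToTrunc_inclFactor_map_eq_mk {I' : Type} [Fintype I'] [DecidableEq I'] (σ : I → I')
    {j : Option I} {b : B} {q : MvPolynomial (I × Fin n) B}
    (h : diagToTrunc k n B I d (inclFactor k B j b) = Ideal.Quotient.mk _ q) :
    diagToTrunc k n B I' d (inclFactor k B (j.map σ) b)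
      = Ideal.Quotient.mk _ (rename (Prod.map σ id) q) := by
  rw [diagToTrunc_inclFactor, ← truncMap_comp_factor k σ le_rfl, AlgHom.comp_apply,
    ← diagToTrunc_inclFactor k n B I, h, truncMap_mk]

end Tensor

section Inverse

variable (k : Type) [CommRing k] (n : ℕ) (B : Type) [CommRing B] [Algebra k B]
  [Algebra (MvPolynomial (Fin n) k) B] (I : Type) [DecidableEq I] (d : ℕ)

noncomputable def diagQuotIdeal :
    Ideal ((PiTensorProduct k fun _ : Option I => B) ⧸ diagIdeal k B I ^ (d + 1)) :=
  (diagIdeal k B I).map (Ideal.Quotient.mk _)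

theorem mk_inclFactor_sub_mem_diagQuotIdeal (j : Option I) (b : B) :
    Ideal.Quotient.mk _ (inclFactor k B j b - inclFactor k B none b) ∈ diagQuotIdeal k B I d :=
  Ideal.mem_map_of_mem _ (Ideal.subset_span ⟨j, b, rfl⟩)

noncomputable def truncToDiag :
    Trunc B I n d →ₐ[k] (PiTensorProduct k fun _ : Option I => B) ⧸ diagIdeal k B I ^ (d + 1) :=
  Trunc.lift d
    (aevalTower ((Ideal.Quotient.mkₐ k _).comp (inclFactorAlgHom k B none)) fun v =>
      Ideal.Quotient.mk _
        (inclFactor k B (some v.1) (algebraMap (MvPolynomial (Fin n) k) B (X v.2))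
          - inclFactor k B none (algebraMap (MvPolynomial (Fin n) k) B (X v.2))))
    (diagQuotIdeal k B I d) (Ideal.map_mk_pow_pow_eq_bot _ _) fun v => by
      rw [aevalTower_X]
      exact mk_inclFactor_sub_mem_diagQuotIdeal k B I d _ _

theorem truncToDiag_algebraMap (b : B) :
    truncToDiag k n B I d (algebraMap B _ b) = Ideal.Quotient.mk _ (inclFactor k B none b) :=
  aevalTower_C _ _ b

theorem truncToDiag_mk_X (v : I × Fin n) :
    truncToDiag k n B I d (Ideal.Quotient.mk _ (X v))
      = Ideal.Quotient.mk _
          (inclFactor k B (some v.1) (algebraMap (MvPolynomial (Fin n) k) B (X v.2))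
            - inclFactor k B none (algebraMap (MvPolynomial (Fin n) k) B (X v.2))) :=
  aevalTower_X _ _ v

theorem truncToDiag_comp_algebraMap :
    (truncToDiag k n B I d).comp (IsScalarTower.toAlgHom k B _)
      = (Ideal.Quotient.mkₐ k _).comp (inclFactorAlgHom k B none) :=
  AlgHom.ext (truncToDiag_algebraMap k n B I d)

variable [IsScalarTower k (MvPolynomial (Fin n) k) B]

theorem truncToDiag_comp_translate (i : I) :
    (truncToDiag k n B I d).comp (translate k n B d i)
      = ((Ideal.Quotient.mkₐ k _).comp (inclFactorAlgHom k B (some i))).comp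
          (IsScalarTower.toAlgHom k (MvPolynomial (Fin n) k) B) := by
  ext m
  simp [translate, truncToDiag_algebraMap, truncToDiag_mk_X]

theorem isLiftMod_mk_inclFactorAlgHom (i : I) :
    IsLiftMod (diagQuotIdeal k B I d)
      (((Ideal.Quotient.mkₐ k _).comp (inclFactorAlgHom k B (some i))).comp
          (IsScalarTower.toAlgHom k (MvPolynomial (Fin n) k) B))
      ((Ideal.Quotient.mkₐ k _).comp (inclFactorAlgHom k B none))
      ((Ideal.Quotient.mkₐ k _).comp (inclFactorAlgHom k B (some i))) :=
  ⟨rfl, fun b => by simpa using mk_inclFactor_sub_mem_diagQuotIdeal k B I d (some i) b⟩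

variable [Algebra.FormallyEtale (MvPolynomial (Fin n) k) B]

theorem truncToDiag_comp_shiftedFactor (i : I) :
    (truncToDiag k n B I d).comp (shiftedFactor k n B d i)
      = (Ideal.Quotient.mkₐ k _).comp (inclFactorAlgHom k B (some i)) := by
  have h := (isLiftMod_shiftedFactor k n B d i).comp (truncToDiag k n B I d)
    truncIdeal_le_comap_lift
  rw [truncToDiag_comp_translate, truncToDiag_comp_algebraMap] at h
  exact h.unique ⟨d + 1, Ideal.map_mk_pow_pow_eq_bot _ _⟩
    (isLiftMod_mk_inclFactorAlgHom k n B I d i)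

variable [Fintype I]

theorem truncToDiag_comp_diagToTrunc :
    (truncToDiag k n B I d).comp (diagToTrunc k n B I d) = Ideal.Quotient.mkₐ k _ :=
  inclFactorAlgHom_ext fun j => by
    rw [AlgHom.comp_assoc, diagToTrunc_comp_inclFactorAlgHom]
    cases j with
    | none => exact truncToDiag_comp_algebraMap k n B I d
    | some i => exact truncToDiag_comp_shiftedFactor k n B I d i

theorem diagToTrunc_eq_zero_iff (t : PiTensorProduct k fun _ : Option I => B) :
    diagToTrunc k n B I d t = 0 ↔ t ∈ diagIdeal k B I ^ (d + 1) := by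
  refine ⟨fun h => ?_, fun h => Ideal.pow_le_ker_of_le_comap
    (diagIdeal_le_comap_diagToTrunc k n B I d) (Ideal.map_mk_pow_pow_eq_bot _ _) h⟩
  rw [← Ideal.Quotient.eq_zero_iff_mem, ← Ideal.Quotient.mkₐ_eq_mk k,
    ← truncToDiag_comp_diagToTrunc k n B I d, AlgHom.comp_apply, h, map_zero]

end Inverse

end DiagonalCompletion

/-- The isomorphism of formal schemes is encoded levelwise, as isomorphisms
`O(Y^{{0} ⊔ I})/J^{d+1} ≅ O(Y × (𝔸^n)^I)/M^{d+1}` compatible with truncation, whose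
functoriality in `I` is checked on the generators `inclFactor`. -/
theorem formal_completion_along_diagonal_iso
    (k : Type) [Field k] (n : ℕ) (B : Type) [CommRing B] [Algebra k B]
    [Algebra (MvPolynomial (Fin n) k) B] [IsScalarTower k (MvPolynomial (Fin n) k) B]
    (hetale : Algebra.Etale (MvPolynomial (Fin n) k) B) :
    ∃ u : ∀ (I : Type) [Fintype I] [DecidableEq I] (d : ℕ),
        (PiTensorProduct k fun _ : Option I => B) →ₐ[k]
          (MvPolynomial (I × Fin n) B ⧸ (originIdeal B I n) ^ (d + 1)),
      (∀ (I : Type) [Fintype I] [DecidableEq I] (d : ℕ),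
        Function.Surjective (u I d)) ∧
      (∀ (I : Type) [Fintype I] [DecidableEq I] (d : ℕ)
        (t : PiTensorProduct k fun _ : Option I => B),
        u I d t = 0 ↔ t ∈ (diagIdeal k B I) ^ (d + 1)) ∧
      (∀ (I : Type) [Fintype I] [DecidableEq I] (d : ℕ)
        (t : PiTensorProduct k fun _ : Option I => B) (q : MvPolynomial (I × Fin n) B),
        u I (d + 1) t = Ideal.Quotient.mk ((originIdeal B I n) ^ (d + 1 + 1)) q →
          u I d t = Ideal.Quotient.mk ((originIdeal B I n) ^ (d + 1)) q) ∧
      (∀ (I I' : Type) [Fintype I] [DecidableEq I] [Fintype I'] [DecidableEq I']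
        (σ : I → I') (d : ℕ) (i : Option I) (b : B) (q : MvPolynomial (I × Fin n) B),
        u I d (inclFactor k B i b) = Ideal.Quotient.mk ((originIdeal B I n) ^ (d + 1)) q →
          u I' d (inclFactor k B (Option.map σ i) b)
            = Ideal.Quotient.mk ((originIdeal B I' n) ^ (d + 1))
                (MvPolynomial.rename (Prod.map σ id) q)) := by
  have := hetale
  open DiagonalCompletion in
  exact ⟨fun I _ _ d => diagToTrunc k n B I d,
    fun I _ _ d => diagToTrunc_surjective k n B I d,
    fun I _ _ d => diagToTrunc_eq_zero_iff k n B I d,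
    fun I _ _ d _ _ => diagToTrunc_eq_mk_of_succ k n B d,
    fun _ _ _ _ _ _ σ d _ _ _ => diagToTrunc_inclFactor_map_eq_mk k n B d σ⟩
end
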